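/- Let m ≥ 1 be an integer, let A = {x ∈ ℝ² : 1 < |x| < 2} be the open annulus, and let R_m : ℝ² → ℝ² denote the rotation about the origin by angle 2π/m. Then for every real β > 4πm, the supremum of ∫_A exp(β u²) dx, taken over all smooth functions u : ℝ² → ℝ with compact support contained in A satisfying u(R_m x) = u(x) for all x ∈ ℝ² and ∫_A |∇u|² dx ≤ 1, is +∞. -/

import Mathlib

set_option maxHeartbeats 1000000
set_option linter.unusedSectionVars false
set_option linter.unusedVariables false
set_option linter.deprecated false

open MeasureTheory Real

/-- The open annulus `{x ∈ ℝ² : 1 < |x| < 2}`, with `ℝ²` realized as `ℂ`. -/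
def annulus : Set ℂ := {x : ℂ | 1 < ‖x‖ ∧ ‖x‖ < 2}

/-- The rotation of the plane about the origin by angle `2π/m`. -/
noncomputable def rotBy (m : ℕ) (x : ℂ) : ℂ := Complex.exp (2 * π * Complex.I / m) * x

namespace TMS

/-- plateau integrand -/
noncomputable def φf (n : ℕ) (σ : ℝ) : ℝ :=
  Real.smoothTransition (n*σ) * Real.smoothTransition (n*(1-σ))

lemma φf_contDiff (n : ℕ) : ContDiff ℝ (⊤ : ℕ∞) (φf n) := by
  unfold φf
  exact ((Real.smoothTransition.contDiff.comp ((contDiff_const).mul contDiff_id)).mul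
    (Real.smoothTransition.contDiff.comp ((contDiff_const).mul (contDiff_const.sub contDiff_id))))

lemma φf_nonneg (n : ℕ) (σ : ℝ) : 0 ≤ φf n σ :=
  mul_nonneg (Real.smoothTransition.nonneg _) (Real.smoothTransition.nonneg _)

lemma φf_le_one (n : ℕ) (σ : ℝ) : φf n σ ≤ 1 :=
  mul_le_one₀ (Real.smoothTransition.le_one _) (Real.smoothTransition.nonneg _)
    (Real.smoothTransition.le_one _)

lemma φf_eq_zero_left (n : ℕ) {σ : ℝ} (h : σ ≤ 0) : φf n σ = 0 := by
  unfold φf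
  rw [Real.smoothTransition.zero_of_nonpos (x := (n:ℝ)*σ)
    (mul_nonpos_of_nonneg_of_nonpos (Nat.cast_nonneg n) h), zero_mul]

lemma φf_eq_zero_right (n : ℕ) {σ : ℝ} (h : 1 ≤ σ) : φf n σ = 0 := by
  unfold φf
  rw [Real.smoothTransition.zero_of_nonpos (x := (n:ℝ)*(1-σ)) (by nlinarith [Nat.cast_nonneg (α := ℝ) n]), mul_zero]

lemma φf_eq_one (n : ℕ) {σ : ℝ} (h1 : 1/n ≤ σ) (h2 : σ ≤ 1 - 1/n) (hn : 1 ≤ n) : φf n σ = 1 := by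
  have hn' : (0:ℝ) < n := by exact_mod_cast hn
  unfold φf
  rw [div_le_iff₀ hn'] at h1
  have h2' : (n:ℝ) * σ ≤ n - 1 := by
    have := (mul_le_mul_of_nonneg_left h2 hn'.le)
    have hd : (n:ℝ) * (1 - 1/n) = n - 1 := by field_simp
    linarith [hd ▸ this]
  rw [Real.smoothTransition.one_of_one_le (by linarith),
    Real.smoothTransition.one_of_one_le (by nlinarith), one_mul]


noncomputable def Φ (n : ℕ) (x : ℝ) : ℝ := ∫ σ in (0:ℝ)..x, φf n σ

lemma φf_cont (n : ℕ) : Continuous (φf n) := (φf_contDiff n).continuous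

lemma Φ_hasDerivAt (n : ℕ) (x : ℝ) : HasDerivAt (Φ n) (φf n x) x := by
  exact (intervalIntegral.integral_hasStrictDerivAt_right
    ((φf_cont n).intervalIntegrable _ _) ((φf_cont n).stronglyMeasurableAtFilter _ _)
    (φf_cont n).continuousAt).hasDerivAt

lemma Φ_contDiff (n : ℕ) : ContDiff ℝ (⊤ : ℕ∞) (Φ n) := by
  rw [contDiff_infty_iff_deriv]
  have hd : deriv (Φ n) = φf n := funext fun x => (Φ_hasDerivAt n x).deriv
  exact ⟨fun x => (Φ_hasDerivAt n x).differentiableAt, hd ▸ φf_contDiff n⟩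

lemma Φ_nonpos (n : ℕ) {x : ℝ} (h : x ≤ 0) : Φ n x = 0 := by
  unfold Φ
  rw [intervalIntegral.integral_of_ge h]
  rw [neg_eq_zero]
  apply MeasureTheory.setIntegral_eq_zero_of_forall_eq_zero
  intro σ hσ
  exact φf_eq_zero_left n hσ.2
  -- hσ : σ ∈ Ioc x 0

lemma Φ_ge_one (n : ℕ) {x : ℝ} (h : 1 ≤ x) : Φ n x = Φ n 1 := by
  unfold Φ
  rw [← intervalIntegral.integral_add_adjacent_intervals (a := (0:ℝ)) (b := 1) (c := x)
    ((φf_cont n).intervalIntegrable _ _) ((φf_cont n).intervalIntegrable _ _)]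
  have : (∫ σ in (1:ℝ)..x, φf n σ) = 0 := by
    rw [intervalIntegral.integral_of_le h]
    apply MeasureTheory.setIntegral_eq_zero_of_forall_eq_zero
    intro σ hσ
    exact φf_eq_zero_right n hσ.1.le
  rw [this, add_zero]

lemma Φ_one_ge (n : ℕ) (hn : 3 ≤ n) : 1 - 2/n ≤ Φ n 1 := by
  have hn' : (0:ℝ) < n := by positivity
  have h1 : (1:ℝ)/n ≤ 1 - 1/n := by
    rw [div_le_iff₀ hn', sub_mul, div_mul_cancel₀ _ hn'.ne']
    have : (3:ℝ) ≤ n := by exact_mod_cast hn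
    linarith
  have key : Φ n 1 = (∫ σ in (0:ℝ)..(1/n), φf n σ) + ((∫ σ in (1/n:ℝ)..(1-1/n), φf n σ)
      + ∫ σ in (1-1/n:ℝ)..(1:ℝ), φf n σ) := by
    unfold Φ
    rw [intervalIntegral.integral_add_adjacent_intervals ((φf_cont n).intervalIntegrable _ _)
      ((φf_cont n).intervalIntegrable _ _),
      intervalIntegral.integral_add_adjacent_intervals ((φf_cont n).intervalIntegrable _ _)
      ((φf_cont n).intervalIntegrable _ _)]
  have hmid : (∫ σ in (1/n:ℝ)..(1-1/n), φf n σ) = 1 - 2/n := by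
    rw [intervalIntegral.integral_congr (g := fun _ => (1:ℝ))]
    · simp [intervalIntegral.integral_const]
      ring
    · intro σ hσ
      rw [Set.uIcc_of_le h1] at hσ
      exact φf_eq_one n hσ.1 hσ.2 (by omega)
  have h2 : 0 ≤ ∫ σ in (0:ℝ)..(1/n), φf n σ :=
    intervalIntegral.integral_nonneg (by positivity) (fun σ _ => φf_nonneg n σ)
  have h3 : 0 ≤ ∫ σ in (1-1/n:ℝ)..(1:ℝ), φf n σ := by
    apply intervalIntegral.integral_nonneg _ (fun σ _ => φf_nonneg n σ)
    have : (1:ℝ)/n ≥ 0 := by positivity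
    linarith
  rw [key, hmid]; linarith

lemma Φ_one_pos (n : ℕ) (hn : 3 ≤ n) : 0 < Φ n 1 := by
  have := Φ_one_ge n hn
  have hn' : (2:ℝ)/n ≤ 2/3 := by
    apply div_le_div_of_nonneg_left (by norm_num) (by norm_num)
    exact_mod_cast hn
  linarith


noncomputable def g (n : ℕ) (x : ℝ) : ℝ := Φ n x / Φ n 1

lemma g_hasDerivAt (n : ℕ) (x : ℝ) : HasDerivAt (g n) (φf n x / Φ n 1) x :=
  (Φ_hasDerivAt n x).div_const _

lemma g_contDiff (n : ℕ) : ContDiff ℝ (⊤ : ℕ∞) (g n) := (Φ_contDiff n).div_const _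

lemma g_nonpos (n : ℕ) {x : ℝ} (h : x ≤ 0) : g n x = 0 := by
  unfold g; rw [Φ_nonpos n h, zero_div]

lemma g_one_le (n : ℕ) (hn : 3 ≤ n) {x : ℝ} (h : 1 ≤ x) : g n x = 1 := by
  unfold g; rw [Φ_ge_one n h, div_self (Φ_one_pos n hn).ne']

/-- the radial profile -/
noncomputable def prof (n : ℕ) (t L ρ : ℝ) (r : ℝ) : ℝ :=
  t * (1 - g n (Real.log (r/ρ) / L))

/-- one bump -/
noncomputable def bump (n : ℕ) (t L ρ : ℝ) (p : ℂ) (x : ℂ) : ℝ :=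
  prof n t L ρ ‖x - p‖

section params
variable (n : ℕ) (hn : 3 ≤ n) (t L ρ r0 : ℝ) (hρ : 0 < ρ) (hL : 0 < L)
  (hr0 : r0 = ρ * Real.exp L) (ht : 0 ≤ t)

include hρ hL in
lemma prof_eq_t {r : ℝ} (h0 : 0 ≤ r) (h : r ≤ ρ) : prof n t L ρ r = t := by
  have harg : Real.log (r/ρ) ≤ 0 :=
    Real.log_nonpos (by positivity) ((div_le_one hρ).2 h)
  rw [prof, g_nonpos n (by exact div_nonpos_of_nonpos_of_nonneg harg hL.le)]
  ring

include hρ hL hr0 in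
include hn in
lemma prof_eq_zero {r : ℝ} (h : r0 ≤ r) : prof n t L ρ r = 0 := by
  have hr0pos : 0 < r0 := by rw [hr0]; positivity
  have hrpos : 0 < r := hr0pos.trans_le h
  have harg : L ≤ Real.log (r/ρ) := by
    rw [Real.le_log_iff_exp_le (by positivity)]
    rw [le_div_iff₀ hρ]
    calc Real.exp L * ρ = r0 := by rw [hr0]; ring
    _ ≤ r := h
  rw [prof, g_one_le n hn (by rw [le_div_iff₀ hL, one_mul]; exact harg)]
  ring

include hρ hL in
lemma bump_eq_t {p x : ℂ} (h : ‖x - p‖ ≤ ρ) : bump n t L ρ p x = t :=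
  prof_eq_t n t L ρ hρ hL (norm_nonneg _) h

include hρ hL hr0 in
include hn in
lemma bump_eq_zero {p x : ℂ} (h : r0 ≤ ‖x - p‖) : bump n t L ρ p x = 0 :=
  prof_eq_zero n hn t L ρ r0 hρ hL hr0 h

include hn hρ hL in
lemma bump_contDiff (p : ℂ) : ContDiff ℝ (⊤ : ℕ∞) (bump n t L ρ p) := by
  rw [contDiff_iff_contDiffAt]
  intro x
  rcases lt_or_ge ‖x - p‖ ρ with hx | hx
  · -- locally constant
    apply ContDiffAt.congr_of_eventuallyEq (contDiffAt_const (c := t))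
    have hball : Metric.ball p ρ ∈ nhds x := by
      apply Metric.isOpen_ball.mem_nhds
      rwa [Metric.mem_ball, dist_eq_norm]
    filter_upwards [hball] with y hy
    exact bump_eq_t n t L ρ hρ hL (by rw [Metric.mem_ball, dist_eq_norm] at hy; exact hy.le)
  · have hxp : x - p ≠ 0 := by
      intro h0; rw [h0, norm_zero] at hx; exact absurd hx (not_le.2 hρ)
    have h1 : ContDiffAt ℝ (⊤ : ℕ∞) (fun y : ℂ => ‖y - p‖) x := by
      exact (contDiffAt_norm ℝ hxp).comp x ((contDiff_id.sub contDiff_const).contDiffAt)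
    have h2 : ContDiffAt ℝ (⊤ : ℕ∞) (fun r : ℝ => Real.log (r/ρ)) ‖x - p‖ := by
      apply ContDiffAt.comp (g := Real.log)
      · apply Real.contDiffAt_log.2
        have hxpos : 0 < ‖x - p‖ := hρ.trans_le hx
        positivity
      · exact (contDiff_id.div_const ρ).contDiffAt
    have h3 : ContDiffAt ℝ (⊤ : ℕ∞) (fun y : ℂ => g n (Real.log (‖y - p‖/ρ)/L)) x :=
      by have h2' := (h2.div_const L).comp x h1; exact (g_contDiff n).contDiffAt.comp x h2'
    show ContDiffAt ℝ (⊤ : ℕ∞) (fun y : ℂ => t * (1 - g n (Real.log (‖y - p‖/ρ)/L))) x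
    exact contDiffAt_const.mul (contDiffAt_const.sub h3)

include hn hρ hL hr0 ht in
lemma bump_fderiv_bound (p x : ℂ) :
    ‖fderiv ℝ (bump n t L ρ p) x‖^2 ≤
      Set.indicator (Set.Ioo ρ r0) (fun r => t^2 * ((Φ n 1)⁻¹)^2 / (L^2 * r^2)) ‖x - p‖ := by
  have hΦ : 0 < Φ n 1 := Φ_one_pos n hn
  have hRHS : 0 ≤ Set.indicator (Set.Ioo ρ r0) (fun r => t^2 * ((Φ n 1)⁻¹)^2 / (L^2 * r^2)) ‖x - p‖ := by
    apply Set.indicator_nonneg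
    intro r hr
    positivity
  rcases lt_or_ge ‖x - p‖ ρ with hx | hx
  · -- locally constant, fderiv = 0
    have hev : bump n t L ρ p =ᶠ[nhds x] fun _ => t := by
      have hball : Metric.ball p ρ ∈ nhds x :=
        Metric.isOpen_ball.mem_nhds (by rwa [Metric.mem_ball, dist_eq_norm])
      filter_upwards [hball] with y hy
      exact bump_eq_t n t L ρ hρ hL (by rw [Metric.mem_ball, dist_eq_norm] at hy; exact hy.le)
    rw [hev.fderiv_eq, fderiv_fun_const]
    simpa using hRHS
  · -- compute the derivative
    set r : ℝ := ‖x - p‖ with hrdef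
    have hr : 0 < r := hρ.trans_le hx
    have hxp : x - p ≠ 0 := by
      intro h0; rw [hrdef, h0, norm_zero] at hr; exact lt_irrefl _ hr
    set s : ℝ := Real.log (r/ρ) / L with hsdef
    -- the 1D profile derivative
    have hlog : HasDerivAt (fun u : ℝ => Real.log (u/ρ)) ((1/ρ) / (r/ρ)) r :=
      ((hasDerivAt_id r).div_const ρ).log (by positivity)
    have hcomp : HasDerivAt (fun u : ℝ => g n (Real.log (u/ρ) / L))
        ((φf n s / Φ n 1) * ((1/ρ) / (r/ρ) / L)) r :=
      by have hl := hlog.div_const L; exact (g_hasDerivAt n s).comp r hl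
    have hprof : HasDerivAt (prof n t L ρ)
        (t * (0 - (φf n s / Φ n 1) * ((1/ρ) / (r/ρ) / L))) r := by
      exact ((hasDerivAt_const r (1:ℝ)).sub hcomp).const_mul t
    -- the norm function
    have hNdiff : DifferentiableAt ℝ (fun y : ℂ => ‖y - p‖) x := by
      exact ((contDiffAt_norm ℝ hxp).differentiableAt (by simp : (1 : WithTop ℕ∞) ≠ 0)).comp x
        ((differentiable_id.sub (differentiable_const p)) x)
    have hNf : HasFDerivAt (fun y : ℂ => ‖y - p‖) (fderiv ℝ (fun y : ℂ => ‖y - p‖) x) x :=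
      hNdiff.hasFDerivAt
    have hNlip : LipschitzWith 1 (fun y : ℂ => ‖y - p‖) := by
      apply LipschitzWith.of_dist_le_mul
      intro a b
      rw [NNReal.coe_one, one_mul, Real.dist_eq, dist_eq_norm]
      have := abs_norm_sub_norm_le (a - p) (b - p)
      simpa using this
    have hNnorm : ‖fderiv ℝ (fun y : ℂ => ‖y - p‖) x‖ ≤ 1 := by
      simpa using hNf.le_of_lipschitz hNlip
    have hB : HasFDerivAt (bump n t L ρ p)
        ((t * (0 - (φf n s / Φ n 1) * ((1/ρ) / (r/ρ) / L))) •
          fderiv ℝ (fun y : ℂ => ‖y - p‖) x) x :=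
      hprof.comp_hasFDerivAt x hNf
    rw [hB.fderiv]
    set D : ℝ := t * (0 - (φf n s / Φ n 1) * ((1/ρ) / (r/ρ) / L)) with hDdef
    have hw : (1/ρ) / (r/ρ) / L = (L * r)⁻¹ := by
      rw [div_div_div_eq, one_mul, div_div]
      rw [inv_eq_one_div, div_eq_div_iff (by positivity) (by positivity)]
      ring
    have hDsimp : D = -(t * (φf n s / Φ n 1) / (L * r)) := by
      rw [hDdef, hw]; ring
    have hnormle : ‖D • fderiv ℝ (fun y : ℂ => ‖y - p‖) x‖ ≤ |D| := by
      rw [norm_smul]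
      calc ‖D‖ * ‖fderiv ℝ (fun y : ℂ => ‖y - p‖) x‖ ≤ ‖D‖ * 1 := by
            apply mul_le_mul_of_nonneg_left hNnorm (norm_nonneg _)
      _ = |D| := by rw [mul_one, Real.norm_eq_abs]
    rcases lt_or_ge r r0 with hrlt | hrge
    · rcases eq_or_lt_of_le hx with heq | hlt
      · -- r = ρ : φf s = 0 since s = 0
        have hs0 : s = 0 := by rw [hsdef, ← heq, div_self hρ.ne', Real.log_one, zero_div]
        have : D = 0 := by rw [hDsimp, hs0, φf_eq_zero_left n le_rfl, zero_div, mul_zero, zero_div, neg_zero]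
        rw [this, zero_smul, norm_zero]
        simpa using hRHS
      · -- ρ < r < r0
        have hmem : r ∈ Set.Ioo ρ r0 := ⟨hlt, hrlt⟩
        rw [Set.indicator_of_mem hmem]
        have hq1 : φf n s / Φ n 1 ≤ (Φ n 1)⁻¹ := by
          rw [div_le_iff₀ hΦ, inv_mul_cancel₀ hΦ.ne']
          exact φf_le_one n s
        have hq0 : 0 ≤ φf n s / Φ n 1 := div_nonneg (φf_nonneg n s) hΦ.le
        have hDabs : |D| ≤ t * (Φ n 1)⁻¹ / (L * r) := by
          rw [hDsimp, abs_neg, abs_div, abs_mul]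
          rw [abs_of_nonneg ht, abs_of_nonneg hq0, abs_of_pos (by positivity : (0:ℝ) < L * r)]
          apply div_le_div_of_nonneg_right _ (by positivity)
          exact mul_le_mul_of_nonneg_left hq1 ht
        calc ‖D • fderiv ℝ (fun y : ℂ => ‖y - p‖) x‖^2 ≤ (t * (Φ n 1)⁻¹ / (L * r))^2 := by
              apply sq_le_sq'
              · linarith [abs_nonneg D, (abs_le.1 (le_refl |D|)), hnormle.trans hDabs,
                  norm_nonneg (D • fderiv ℝ (fun y : ℂ => ‖y - p‖) x)]
              · exact hnormle.trans hDabs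
        _ = t^2 * ((Φ n 1)⁻¹)^2 / (L^2 * r^2) := by ring
    · -- r ≥ r0 : s ≥ 1, φf s = 0
      have hs1 : 1 ≤ s := by
        rw [hsdef, le_div_iff₀ hL, one_mul, Real.le_log_iff_exp_le (by positivity), le_div_iff₀ hρ]
        calc Real.exp L * ρ = r0 := by rw [hr0]; ring
        _ ≤ r := hrge
      have : D = 0 := by rw [hDsimp, φf_eq_zero_right n hs1, zero_div, mul_zero, zero_div, neg_zero]
      rw [this, zero_smul, norm_zero]
      simpa using hRHS

end params

noncomputable def pt (m k : ℕ) : ℂ := (3/2) * Complex.exp ((2*π*k/m : ℝ) * Complex.I)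

noncomputable def r1 (m : ℕ) : ℝ := min (1/4) ((1/2) * Real.sqrt (2 - 2*Real.cos (π/m)))

lemma pt_norm (m k : ℕ) : ‖pt m k‖ = 3/2 := by
  rw [pt, norm_mul, Complex.norm_exp_ofReal_mul_I]
  norm_num

lemma cos_pi_div_lt_one (m : ℕ) (hm : 1 ≤ m) : Real.cos (π/m) < 1 := by
  have hm' : (1:ℝ) ≤ m := by exact_mod_cast hm
  have h1 : 0 < π/m := by positivity
  have h2 : π/m ≤ π := by
    rw [div_le_iff₀ (by positivity)]
    nlinarith [Real.pi_pos]
  have := Real.cos_lt_cos_of_nonneg_of_le_pi (le_refl 0) h2 h1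
  rwa [Real.cos_zero] at this

lemma r1_pos (m : ℕ) (hm : 1 ≤ m) : 0 < r1 m := by
  apply lt_min (by norm_num)
  have := cos_pi_div_lt_one m hm
  have h : 0 < 2 - 2*Real.cos (π/m) := by linarith
  positivity

lemma r1_le (m : ℕ) : r1 m ≤ 1/4 := min_le_left _ _

lemma closedBall_subset_annulus (m k : ℕ) (hm : 1 ≤ m) :
    Metric.closedBall (pt m k) (r1 m) ⊆ annulus := by
  intro x hx
  rw [Metric.mem_closedBall, dist_eq_norm] at hx
  have h := (r1_le m)
  have h1 : ‖pt m k‖ = 3/2 := pt_norm m k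
  have hlow : (5:ℝ)/4 ≤ ‖x‖ := by
    have := norm_sub_norm_le (pt m k) x
    have h2 : ‖pt m k - x‖ = ‖x - pt m k‖ := norm_sub_rev _ _
    linarith [hx.trans h]
  have hup : ‖x‖ ≤ 7/4 := by
    have h4 := norm_sub_norm_le x (pt m k)
    linarith [hx.trans h]
  constructor
  · linarith
  · linarith

lemma cos_bound (m : ℕ) (hm : 1 ≤ m) {θ : ℝ} (h1 : π/m ≤ θ) (h2 : θ ≤ 2*π - π/m) :
    Real.cos θ ≤ Real.cos (π/m) := by
  have hm' : (1:ℝ) ≤ m := by exact_mod_cast hm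
  have hpd : 0 < π/m := by positivity
  have hpd2 : π/m ≤ π := by rw [div_le_iff₀ (by positivity)]; nlinarith [Real.pi_pos]
  rcases le_or_gt θ π with hθ | hθ
  · exact Real.cos_le_cos_of_nonneg_of_le_pi hpd.le hθ h1
  · have : Real.cos (2*π - θ) ≤ Real.cos (π/m) := by
      apply Real.cos_le_cos_of_nonneg_of_le_pi hpd.le (by linarith) (by linarith)
    rwa [Real.cos_two_pi_sub] at this

lemma norm_exp_sub_exp (a b : ℝ) :
    ‖Complex.exp ((a:ℝ) * Complex.I) - Complex.exp ((b:ℝ) * Complex.I)‖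
      = Real.sqrt (2 - 2*Real.cos (a - b)) := by
  have h1 : Complex.exp ((a:ℝ) * Complex.I) - Complex.exp ((b:ℝ) * Complex.I)
      = Complex.ofReal (Real.cos a - Real.cos b) + Complex.ofReal (Real.sin a - Real.sin b) * Complex.I := by
    rw [Complex.exp_mul_I, Complex.exp_mul_I]
    push_cast [Complex.ofReal_cos, Complex.ofReal_sin]
    ring
  rw [h1, Complex.norm_add_mul_I]
  congr 1
  have hc := Real.cos_sub a b
  have h2 := Real.sin_sq_add_cos_sq a
  have h3 := Real.sin_sq_add_cos_sq b
  nlinarith [hc, h2, h3]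

lemma pt_dist (m : ℕ) (hm : 1 ≤ m) {j k : ℕ} (hj : j < m) (hk : k < m) (hne : j ≠ k) :
    2 * r1 m < dist (pt m j) (pt m k) := by
  have hm' : (1:ℝ) ≤ m := by exact_mod_cast hm
  have hmpos : (0:ℝ) < m := by linarith
  set a : ℝ := 2*π*j/m
  set b : ℝ := 2*π*k/m
  have hdist : dist (pt m j) (pt m k) = (3/2) * Real.sqrt (2 - 2*Real.cos (a - b)) := by
    rw [dist_eq_norm, pt, pt, ← mul_sub, norm_mul]
    rw [norm_exp_sub_exp]
    norm_num
    rfl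
  -- cos (a-b) = cos |a-b| and π/m ≤ |a-b| ≤ 2π - π/m
  have habs : |(j:ℝ) - k| ≥ 1 := by
    have hZ : (1:ℤ) ≤ |(j:ℤ) - (k:ℤ)| := by
      exact Int.one_le_abs (by omega)
    have h2 : (1:ℝ) ≤ |(((j:ℤ) - (k:ℤ) : ℤ) : ℝ)| := by
      rw [← Int.cast_abs]; exact_mod_cast hZ
    push_cast at h2
    exact h2
  have habs2 : |(j:ℝ) - k| ≤ m - 1 := by
    have hj' : (j:ℝ) ≤ m - 1 := by
      have : (j:ℝ) + 1 ≤ m := by exact_mod_cast hj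
      linarith
    have hk' : (k:ℝ) ≤ m - 1 := by
      have : (k:ℝ) + 1 ≤ m := by exact_mod_cast hk
      linarith
    rw [abs_sub_le_iff]
    constructor <;> nlinarith [Nat.cast_nonneg (α := ℝ) j, Nat.cast_nonneg (α := ℝ) k]
  have hab : |a - b| = 2*π*|(j:ℝ)-k|/m := by
    have : a - b = 2*π*((j:ℝ)-k)/m := by rw [show a = 2*π*j/m from rfl, show b = 2*π*k/m from rfl]; ring
    rw [this, abs_div, abs_of_pos hmpos, abs_mul, abs_of_pos (by positivity : (0:ℝ) < 2*π)]
  have hcos : Real.cos (a - b) ≤ Real.cos (π/m) := by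
    rw [← Real.cos_abs]
    apply cos_bound m hm
    · rw [hab]
      have hnum : π ≤ 2*π*|(j:ℝ)-k| := by nlinarith [Real.pi_pos]
      exact (div_le_div_iff_of_pos_right hmpos).2 hnum
    · rw [hab, div_le_iff₀ hmpos]
      have hfield : (2*π - π/(m:ℝ))*(m:ℝ) = 2*π*m - π := by field_simp
      rw [hfield]
      have h5 : 2*π*|(j:ℝ)-k| ≤ 2*π*((m:ℝ)-1) :=
        mul_le_mul_of_nonneg_left habs2 (by positivity)
      nlinarith [Real.pi_pos]
  -- now compare
  have hcos1 : Real.cos (π/m) < 1 := cos_pi_div_lt_one m hm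
  have hpos : 0 < 2 - 2*Real.cos (π/m) := by linarith
  have hsq : (2 * r1 m)^2 ≤ 2 - 2*Real.cos (π/m) := by
    have h1 : 2 * r1 m ≤ Real.sqrt (2 - 2*Real.cos (π/m)) := by
      have := min_le_right (1/4 : ℝ) ((1/2) * Real.sqrt (2 - 2*Real.cos (π/m)))
      rw [r1]; linarith
    have h2 : 0 ≤ 2 * r1 m := by linarith [r1_pos m hm]
    nlinarith [Real.sq_sqrt hpos.le]
  have hsq2 : 2 - 2*Real.cos (π/m) < (dist (pt m j) (pt m k))^2 := by
    rw [hdist, mul_pow, Real.sq_sqrt (by nlinarith [Real.neg_one_le_cos (a-b)] : (0:ℝ) ≤ 2 - 2*Real.cos (a - b))]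
    nlinarith [Real.neg_one_le_cos (a-b)]
  nlinarith [dist_nonneg (x := pt m j) (y := pt m k), r1_pos m hm]

lemma rotBy_eq (m : ℕ) (x : ℂ) :
    rotBy m x = Complex.exp (((2*π/m : ℝ)) * Complex.I) * x := by
  rw [rotBy]
  congr 2
  push_cast
  ring

lemma rot_pt (m k : ℕ) :
    Complex.exp (((2*π/m : ℝ)) * Complex.I) * pt m k = pt m (k+1) := by
  rw [pt, pt]
  rw [mul_comm (Complex.exp _) _, mul_assoc, ← Complex.exp_add]
  congr 2
  push_cast
  ring

lemma pt_period (m : ℕ) (hm : 1 ≤ m) : pt m m = pt m 0 := by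
  have hm' : (m:ℝ) ≠ 0 := by positivity
  rw [pt, pt]
  congr 1
  have h1 : (2*π*m/m : ℝ) = 2*π := by field_simp
  rw [h1]
  have h2 : (2*π*(0:ℕ)/m : ℝ) = 0 := by simp
  rw [h2]
  rw [Complex.ofReal_zero, zero_mul, Complex.exp_zero]
  have : ((2*π : ℝ) : ℂ) * Complex.I = 2*π*Complex.I := by push_cast; ring
  rw [this, Complex.exp_two_pi_mul_I]


lemma integral_radial (c ρ r0 : ℝ) (hρ : 0 < ρ) (hr : ρ < r0) :
    ∫ x : ℂ, Set.indicator (Set.Ioo ρ r0) (fun r => c / r^2) ‖x‖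
      = 2 * π * (c * Real.log (r0/ρ)) := by
  rw [integral_fun_norm_addHaar volume (Set.indicator (Set.Ioo ρ r0) (fun r => c / r^2))]
  rw [Complex.finrank_real_complex]
  have hvol : volume.real (Metric.ball (0:ℂ) 1) = π := by
    rw [measureReal_def, Complex.volume_ball]
    simp [ENNReal.toReal_mul, ENNReal.toReal_pow, ENNReal.toReal_ofReal]
  rw [hvol]
  have hinner : (∫ y in Set.Ioi (0:ℝ), y ^ (2 - 1) •
      Set.indicator (Set.Ioo ρ r0) (fun r => c / r^2) y) = c * Real.log (r0/ρ) := by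
    have hcong : ∀ y ∈ Set.Ioi (0:ℝ), y ^ (2 - 1) •
        Set.indicator (Set.Ioo ρ r0) (fun r => c / r^2) y
        = Set.indicator (Set.Ioo ρ r0) (fun r => c / r) y := by
      intro y hy
      simp only [pow_one, smul_eq_mul]
      by_cases hmem : y ∈ Set.Ioo ρ r0
      · rw [Set.indicator_of_mem hmem, Set.indicator_of_mem hmem]
        have hy0 : y ≠ 0 := (lt_trans hρ hmem.1).ne'
        field_simp
        ring
      · rw [Set.indicator_of_notMem hmem, Set.indicator_of_notMem hmem, mul_zero]
    rw [setIntegral_congr_fun measurableSet_Ioi hcong]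
    rw [setIntegral_indicator measurableSet_Ioo]
    have hss : Set.Ioi (0:ℝ) ∩ Set.Ioo ρ r0 = Set.Ioo ρ r0 := by
      apply Set.inter_eq_self_of_subset_right
      intro y hy; exact lt_trans hρ hy.1
    rw [hss]
    rw [← integral_Ioc_eq_integral_Ioo, ← intervalIntegral.integral_of_le hr.le]
    simp_rw [div_eq_mul_inv]
    rw [intervalIntegral.integral_const_mul, integral_inv (by
      rw [Set.uIcc_of_le hr.le]
      intro h
      exact absurd h.1 (not_le.2 hρ))]
    rw [div_eq_mul_inv]
  rw [hinner]
  rw [nsmul_eq_mul, smul_eq_mul]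
  push_cast
  ring


end TMS

open TMS

/-- Sharpness of the exponent `4πm` for `m`-fold rotationally symmetric functions on the
annulus: for every `β > 4πm`, the supremum of `∫_A exp(β u²)` over all smooth `u` with
compact support in the annulus, invariant under the rotation by `2π/m`, and with
`∫_A |∇u|² ≤ 1`, is `+∞`. -/
theorem trudinger_moser_annulus_symmetric_sharpness (m : ℕ) (hm : 1 ≤ m) (β : ℝ)
    (hβ : 4 * π * m < β) :
    ∀ C : ℝ, ∃ u : ℂ → ℝ, ContDiff ℝ (⊤ : ℕ∞) u ∧ HasCompactSupport u ∧
      tsupport u ⊆ annulus ∧ (∀ x : ℂ, u (rotBy m x) = u x) ∧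
      (∫ x in annulus, ‖gradient u x‖ ^ 2) ≤ 1 ∧
      C < ∫ x in annulus, Real.exp (β * (u x) ^ 2) := by
  intro C
  have hπ := Real.pi_pos
  have hm' : (1:ℝ) ≤ m := by exact_mod_cast hm
  have hβpos : 0 < β := lt_trans (by positivity) hβ
  -- choice of n
  set a := Real.sqrt (4*π*m/β) with ha_def
  have hapos : 0 < a := Real.sqrt_pos.2 (by positivity)
  have halt : a < 1 := by
    rw [ha_def, show (1:ℝ) = Real.sqrt 1 by rw [Real.sqrt_one]]
    apply Real.sqrt_lt_sqrt (by positivity)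
    rw [div_lt_one hβpos]; exact hβ
  have ha2 : a^2 = 4*π*m/β := Real.sq_sqrt (by positivity)
  obtain ⟨n, hngt⟩ := exists_nat_gt (max 3 (2/(1-a)))
  have hn3 : 3 ≤ n := by
    have h3 : (3:ℝ) < n := lt_of_le_of_lt (le_max_left _ _) hngt
    exact_mod_cast h3.le
  have hnpos : (0:ℝ) < n := by
    have : (3:ℝ) ≤ n := by exact_mod_cast hn3
    linarith
  have h2n : 2/(n:ℝ) < 1 - a := by
    have h1 : 2/(1-a) < n := lt_of_le_of_lt (le_max_right _ _) hngt
    rw [div_lt_iff₀ (by linarith)] at h1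
    rw [div_lt_iff₀ hnpos]
    linarith only [h1]
  have hΦpos : 0 < Φ n 1 := Φ_one_pos n hn3
  have hΦge : 1 - 2/(n:ℝ) ≤ Φ n 1 := Φ_one_ge n hn3
  have hΦgta : a < Φ n 1 := by linarith only [hΦge, h2n]
  set Cg := (Φ n 1)⁻¹ with hCg
  have hCgpos : 0 < Cg := inv_pos.2 hΦpos
  have hCga : Cg < a⁻¹ := by
    rw [hCg]
    exact (inv_strictAnti₀ hapos hΦgta)
  have hCgsq : Cg^2 < β/(4*π*m) := by
    have h2 : Cg^2 < (a⁻¹)^2 := by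
      apply pow_lt_pow_left₀ hCga hCgpos.le
      norm_num
    have h3 : (a⁻¹)^2 = β/(4*π*m) := by
      rw [← one_div, div_pow, one_pow, ha2, one_div_div]
    linarith only [h3 ▸ h2]
  set κ := β/(2*π*m*Cg^2) - 2 with hκ
  have hκpos : 0 < κ := by
    have hX : 0 < 2*π*(m:ℝ)*Cg^2 := by positivity
    rw [hκ, sub_pos, lt_div_iff₀ hX]
    have h4 : Cg^2 * (4*π*m) < β := (lt_div_iff₀ (by positivity)).1 hCgsq
    linarith only [h4]
  -- radius and scales
  set r0 := r1 m with hr0def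
  have hr0pos : 0 < r0 := r1_pos m hm
  have hr0le : r0 ≤ 1/4 := r1_le m
  set X := (|C|+1)/(π*r0^2) with hXdef
  have hXpos : 0 < X := by positivity
  set L := max 1 ((Real.log X + 1)/κ) with hLdef
  have hL1 : (1:ℝ) ≤ L := le_max_left _ _
  have hLpos : 0 < L := lt_of_lt_of_le one_pos hL1
  have hκL : Real.log X + 1 ≤ κ * L := by
    have h1 : (Real.log X + 1)/κ ≤ L := le_max_right _ _
    calc Real.log X + 1 = κ * ((Real.log X + 1)/κ) := by field_simp
    _ ≤ κ * L := mul_le_mul_of_nonneg_left h1 hκpos.le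
  set ρ := r0 * Real.exp (-L) with hρdef
  have hρpos : 0 < ρ := by positivity
  have hρlt : ρ < r0 := by
    rw [hρdef]
    have he1 : Real.exp (-L) < 1 := Real.exp_lt_one_iff.2 (by linarith only [hLpos])
    have h2 := mul_lt_mul_of_pos_left he1 hr0pos
    simpa using h2
  have hr0eq : r0 = ρ * Real.exp L := by
    rw [hρdef, mul_assoc, ← Real.exp_add]
    simp
  set t := Real.sqrt (L/(2*π*m*Cg^2)) with htdef
  have htnn : 0 ≤ t := Real.sqrt_nonneg _
  have ht2 : t^2 = L/(2*π*m*Cg^2) := Real.sq_sqrt (by positivity)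
  -- the function
  set u : ℂ → ℝ := fun x => ∑ k ∈ Finset.range m, bump n t L ρ (pt m k) x with hu
  -- separation
  have hsep : ∀ j ∈ Finset.range m, ∀ k ∈ Finset.range m, j ≠ k →
      ∀ x : ℂ, ‖x - pt m j‖ ≤ r0 → r0 < ‖x - pt m k‖ := by
    intro j hj k hk hne x hxj
    have hd := pt_dist m hm (Finset.mem_range.1 hj) (Finset.mem_range.1 hk) hne
    have heq : pt m j - pt m k = (x - pt m k) - (x - pt m j) := by ring
    have htri : dist (pt m j) (pt m k) ≤ ‖x - pt m k‖ + ‖x - pt m j‖ := by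
      rw [dist_eq_norm, heq]
      exact norm_sub_le _ _
    rw [← hr0def] at hd
    linarith only [hd, htri, hxj]
  -- basic properties
  have hsmooth : ContDiff ℝ (⊤:ℕ∞) u :=
    ContDiff.sum (fun k _ => bump_contDiff n hn3 t L ρ hρpos hLpos (pt m k))
  have hbz : ∀ (k : ℕ) (x : ℂ), r0 ≤ ‖x - pt m k‖ → bump n t L ρ (pt m k) x = 0 :=
    fun k x h => bump_eq_zero n hn3 t L ρ r0 hρpos hLpos hr0eq h
  have hsupp : Function.support u ⊆ ⋃ k ∈ Finset.range m, Metric.closedBall (pt m k) r0 := by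
    intro x hx
    by_contra hxn
    apply hx
    simp only [Set.mem_iUnion] at hxn
    push_neg at hxn
    rw [hu]
    apply Finset.sum_eq_zero
    intro k hk
    apply hbz
    have h2 := hxn k hk
    rw [Metric.mem_closedBall, dist_eq_norm] at h2
    exact (not_le.1 h2).le
  have hScpt : IsCompact (⋃ k ∈ Finset.range m, Metric.closedBall (pt m k) r0) :=
    (Finset.range m).finite_toSet.isCompact_biUnion (fun k _ => isCompact_closedBall _ _)
  have htsupp : tsupport u ⊆ ⋃ k ∈ Finset.range m, Metric.closedBall (pt m k) r0 :=
    closure_minimal hsupp hScpt.isClosed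
  have hcompact : HasCompactSupport u :=
    hScpt.of_isClosed_subset (isClosed_tsupport u) htsupp
  have hann : tsupport u ⊆ annulus := by
    refine htsupp.trans (Set.iUnion₂_subset fun k _ => ?_)
    rw [hr0def]
    exact closedBall_subset_annulus m k hm
  -- invariance
  have hinv : ∀ x : ℂ, u (rotBy m x) = u x := by
    intro x
    rw [rotBy_eq]
    set e := Complex.exp (((2*π/m : ℝ)) * Complex.I) with he
    have henorm : ‖e‖ = 1 := by
      rw [he, Complex.norm_exp_ofReal_mul_I]
    set F : ℕ → ℝ := fun k => bump n t L ρ (pt m k) (e * x) with hF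
    have hstep : ∀ k, bump n t L ρ (pt m k) x = F (k+1) := by
      intro k
      show prof n t L ρ ‖x - pt m k‖ = prof n t L ρ ‖e*x - pt m (k+1)‖
      congr 1
      rw [← rot_pt m k, ← mul_sub, norm_mul, henorm, one_mul]
    have hF0 : F m = F 0 := by
      rw [hF]
      simp only
      rw [pt_period m hm]
    obtain ⟨M, rfl⟩ : ∃ M, m = M + 1 := ⟨m - 1, (Nat.succ_pred_eq_of_pos hm).symm⟩
    calc u (e * x) = ∑ k ∈ Finset.range (M+1), F k := rfl
    _ = (∑ k ∈ Finset.range M, F (k+1)) + F 0 := Finset.sum_range_succ' F M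
    _ = (∑ k ∈ Finset.range M, F (k+1)) + F (M+1) := by rw [← hF0]
    _ = ∑ k ∈ Finset.range (M+1), F (k+1) := (Finset.sum_range_succ _ M).symm
    _ = ∑ k ∈ Finset.range (M+1), bump n t L ρ (pt (M+1) k) x :=
        Finset.sum_congr rfl (fun k _ => (hstep k).symm)
    _ = u x := rfl
  -- the majorant for the energy
  set Gf : ℝ → ℝ := Set.indicator (Set.Ioo ρ r0) (fun r => (t^2*Cg^2/L^2) / r^2) with hGf
  have hGnn : ∀ r, 0 ≤ Gf r := fun r => Set.indicator_nonneg (fun y hy => by positivity) r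
  have hbound : ∀ (k : ℕ) (x : ℂ), ‖fderiv ℝ (bump n t L ρ (pt m k)) x‖^2 ≤ Gf ‖x - pt m k‖ := by
    intro k x
    have h := bump_fderiv_bound n hn3 t L ρ r0 hρpos hLpos hr0eq htnn (pt m k) x
    have hfe : (fun r : ℝ => t^2*((Φ n 1)⁻¹)^2/(L^2*r^2)) = (fun r : ℝ => (t^2*Cg^2/L^2)/r^2) :=
      funext (fun r => by rw [← hCg]; ring)
    rw [hfe] at h
    exact h
  have hfderiv_zero : ∀ (k : ℕ) (x : ℂ), r0 < ‖x - pt m k‖ →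
      fderiv ℝ (bump n t L ρ (pt m k)) x = 0 := by
    intro k x hx
    have h := hbound k x
    rw [hGf, Set.indicator_of_notMem (fun hmem => absurd hmem.2 (not_lt.2 hx.le))] at h
    have h2 : ‖fderiv ℝ (bump n t L ρ (pt m k)) x‖^2 = 0 :=
      le_antisymm h (sq_nonneg _)
    exact norm_eq_zero.1 (pow_eq_zero_iff two_ne_zero |>.1 h2)
  have hdiffk : ∀ (k : ℕ) (x : ℂ), DifferentiableAt ℝ (bump n t L ρ (pt m k)) x :=
    fun k x => ((bump_contDiff n hn3 t L ρ hρpos hLpos (pt m k)).differentiable (by simp)) x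
  have hptwise : ∀ x : ℂ, ‖fderiv ℝ u x‖^2 ≤ ∑ k ∈ Finset.range m, Gf ‖x - pt m k‖ := by
    intro x
    have hsum : fderiv ℝ u x = ∑ k ∈ Finset.range m, fderiv ℝ (bump n t L ρ (pt m k)) x := by
      rw [hu]
      exact fderiv_fun_sum (fun k _ => hdiffk k x)
    by_cases hex : ∃ j ∈ Finset.range m, ‖x - pt m j‖ ≤ r0
    · obtain ⟨j, hj, hxj⟩ := hex
      have hzero : ∀ k ∈ Finset.range m, k ≠ j → fderiv ℝ (bump n t L ρ (pt m k)) x = 0 :=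
        fun k hk hkj => hfderiv_zero k x (hsep j hj k hk (Ne.symm hkj) x hxj)
      rw [hsum, Finset.sum_eq_single_of_mem j hj hzero]
      calc ‖fderiv ℝ (bump n t L ρ (pt m j)) x‖^2 ≤ Gf ‖x - pt m j‖ := hbound j x
      _ ≤ ∑ k ∈ Finset.range m, Gf ‖x - pt m k‖ :=
          Finset.single_le_sum (f := fun k => Gf ‖x - pt m k‖) (fun k _ => hGnn _) hj
    · push_neg at hex
      have hz : ∀ k ∈ Finset.range m, fderiv ℝ (bump n t L ρ (pt m k)) x = 0 :=
        fun k hk => hfderiv_zero k x (hex k hk)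
      rw [hsum, Finset.sum_eq_zero hz, norm_zero]
      have := Finset.sum_nonneg (f := fun k => Gf ‖x - pt m k‖) (fun k (_ : k ∈ Finset.range m) => hGnn _)
      simpa using this
  -- integrability of the majorant
  have hGmeas : Measurable Gf := Measurable.indicator (measurable_const.div (measurable_id.pow_const 2)) measurableSet_Ioo
  have hGint : ∀ k : ℕ, Integrable (fun x : ℂ => Gf ‖x - pt m k‖) := by
    intro k
    apply MeasureTheory.Integrable.mono'
      (g := Set.indicator (Metric.closedBall (pt m k) r0) (fun _ => (t^2*Cg^2/L^2)/ρ^2))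
    · rw [integrable_indicator_iff measurableSet_closedBall]
      exact integrableOn_const measure_closedBall_lt_top.ne
    · exact (hGmeas.comp ((continuous_id.sub continuous_const).norm).measurable).aestronglyMeasurable
    · filter_upwards with x
      rw [Real.norm_eq_abs, abs_of_nonneg (hGnn _)]
      by_cases hmem : ‖x - pt m k‖ ∈ Set.Ioo ρ r0
      · rw [hGf, Set.indicator_of_mem hmem]
        have hxball : x ∈ Metric.closedBall (pt m k) r0 := by
          rw [Metric.mem_closedBall, dist_eq_norm]; exact hmem.2.le
        rw [Set.indicator_of_mem hxball]
        apply div_le_div_of_nonneg_left (by positivity) (by positivity)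
        exact pow_le_pow_left₀ hρpos.le hmem.1.le 2
      · rw [hGf, Set.indicator_of_notMem hmem]
        exact Set.indicator_nonneg (fun _ _ => by positivity) _
  -- gradient norm = fderiv norm
  have hgradnorm : ∀ x : ℂ, ‖gradient u x‖ = ‖fderiv ℝ u x‖ := by
    intro x
    rw [gradient]
    exact LinearIsometryEquiv.norm_map _ _
  have hannmeas : MeasurableSet annulus := by
    have hopen : IsOpen annulus := by
      have : annulus = (fun x : ℂ => ‖x‖) ⁻¹' (Set.Ioo 1 2) := rfl
      rw [this]
      exact isOpen_Ioo.preimage continuous_norm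
    exact hopen.measurableSet
  -- energy bound
  have hlog : Real.log (r0/ρ) = L := by
    rw [hr0eq, mul_comm, mul_div_assoc, div_self hρpos.ne', mul_one, Real.log_exp]
  have hGsumint : Integrable (fun x : ℂ => ∑ k ∈ Finset.range m, Gf ‖x - pt m k‖) :=
    integrable_finset_sum _ (fun k _ => hGint k)
  have henergy : (∫ x in annulus, ‖gradient u x‖^2) ≤ 1 := by
    have step1 : (∫ x in annulus, ‖gradient u x‖^2) = ∫ x in annulus, ‖fderiv ℝ u x‖^2 := by
      simp_rw [hgradnorm]
    have step2 : (∫ x in annulus, ‖fderiv ℝ u x‖^2)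
        ≤ ∫ x in annulus, ∑ k ∈ Finset.range m, Gf ‖x - pt m k‖ := by
      apply integral_mono_of_nonneg
      · filter_upwards with x; positivity
      · exact hGsumint.restrict
      · filter_upwards with x; exact hptwise x
    have step3 : (∫ x in annulus, ∑ k ∈ Finset.range m, Gf ‖x - pt m k‖)
        ≤ ∫ x : ℂ, ∑ k ∈ Finset.range m, Gf ‖x - pt m k‖ := by
      apply setIntegral_le_integral hGsumint
      filter_upwards with x
      exact Finset.sum_nonneg fun k _ => hGnn _
    have step4 : (∫ x : ℂ, ∑ k ∈ Finset.range m, Gf ‖x - pt m k‖)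
        = ∑ k ∈ Finset.range m, ∫ x : ℂ, Gf ‖x - pt m k‖ :=
      integral_finset_sum _ (fun k _ => hGint k)
    have step5 : ∀ k : ℕ, (∫ x : ℂ, Gf ‖x - pt m k‖)
        = 2 * π * ((t^2*Cg^2/L^2) * L) := by
      intro k
      have h1 : (∫ x : ℂ, Gf ‖x - pt m k‖) = ∫ x : ℂ, Gf ‖x‖ :=
        integral_sub_right_eq_self (fun x : ℂ => Gf ‖x‖) (pt m k)
      rw [h1, hGf, integral_radial _ ρ r0 hρpos hρlt, hlog]
    have step6 : (∑ k ∈ Finset.range m, (2 * π * ((t^2*Cg^2/L^2) * L))) = 1 := by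
      rw [Finset.sum_const, Finset.card_range, nsmul_eq_mul, ht2]
      have hmne : (m:ℝ) ≠ 0 := by positivity
      field_simp
    calc (∫ x in annulus, ‖gradient u x‖^2)
        ≤ ∫ x : ℂ, ∑ k ∈ Finset.range m, Gf ‖x - pt m k‖ := by
          rw [step1]; exact step2.trans step3
    _ = ∑ k ∈ Finset.range m, ∫ x : ℂ, Gf ‖x - pt m k‖ := step4
    _ = ∑ k ∈ Finset.range m, (2 * π * ((t^2*Cg^2/L^2) * L)) :=
        Finset.sum_congr rfl (fun k _ => step5 k)
    _ = 1 := step6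
  -- exponential integral
  have hannfin : volume annulus < ⊤ := by
    have hsub : annulus ⊆ Metric.ball (0:ℂ) 2 := by
      intro x hx
      rw [Metric.mem_ball, dist_zero_right]
      exact hx.2
    exact lt_of_le_of_lt (measure_mono hsub) measure_ball_lt_top
  obtain ⟨Mb, hMb⟩ := hcompact.exists_bound_of_continuous hsmooth.continuous
  have hexpint : IntegrableOn (fun x => Real.exp (β * u x^2)) annulus := by
    apply Integrable.mono' (g := fun _ => Real.exp (β * Mb^2))
    · exact integrableOn_const hannfin.ne
    · exact ((Real.continuous_exp.comp
        ((continuous_const.mul (hsmooth.continuous.pow 2)))).aestronglyMeasurable)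
    · filter_upwards with x
      rw [Real.norm_eq_abs, abs_of_pos (Real.exp_pos _)]
      apply Real.exp_le_exp.2
      have h1 : |u x| ≤ Mb := by have := hMb x; rwa [Real.norm_eq_abs] at this
      have h2 : u x^2 ≤ Mb^2 := by
        have h3 := pow_le_pow_left₀ (abs_nonneg (u x)) h1 2
        rwa [sq_abs] at h3
      exact mul_le_mul_of_nonneg_left h2 hβpos.le
  have hball_sub : Metric.ball (pt m 0) ρ ⊆ annulus := by
    intro x hx
    apply closedBall_subset_annulus m 0 hm
    rw [← hr0def]
    exact Metric.closedBall_subset_closedBall hρlt.le (Metric.ball_subset_closedBall hx)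
  have huval : ∀ x ∈ Metric.ball (pt m 0) ρ, u x = t := by
    intro x hx
    rw [Metric.mem_ball, dist_eq_norm] at hx
    show (∑ k ∈ Finset.range m, bump n t L ρ (pt m k) x) = t
    rw [Finset.sum_eq_single_of_mem 0 (Finset.mem_range.2 hm)]
    · exact bump_eq_t n t L ρ hρpos hLpos hx.le
    · intro k hk hk0
      exact hbz k x (hsep 0 (Finset.mem_range.2 hm) k hk (Ne.symm hk0) x (hx.le.trans hρlt.le)).le
  have hlower : π * ρ^2 * Real.exp (β * t^2) ≤ ∫ x in annulus, Real.exp (β * u x^2) := by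
    have hstep : π * ρ^2 * Real.exp (β * t^2)
        = ∫ x in Metric.ball (pt m 0) ρ, Real.exp (β * u x^2) := by
      rw [setIntegral_congr_fun measurableSet_ball
        (fun x hx => by rw [huval x hx] : ∀ x ∈ Metric.ball (pt m 0) ρ,
          Real.exp (β * u x^2) = Real.exp (β * t^2))]
      rw [setIntegral_const, measureReal_def, Complex.volume_ball, smul_eq_mul]
      rw [ENNReal.toReal_mul, ENNReal.toReal_pow, ENNReal.toReal_ofReal hρpos.le]
      rw [ENNReal.coe_toReal, NNReal.coe_real_pi]
      ring
    rw [hstep]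
    apply setIntegral_mono_set hexpint
    · filter_upwards with x
      exact (Real.exp_pos _).le
    · exact HasSubset.Subset.eventuallyLE hball_sub
  -- conclude
  have hval : π * ρ^2 * Real.exp (β*t^2) = π * r0^2 * Real.exp (κ*L) := by
    rw [ht2, hκ, hρdef]
    calc π * (r0 * Real.exp (-L))^2 * Real.exp (β*(L/(2*π*m*Cg^2)))
        = π * r0^2 * (Real.exp (-L) * Real.exp (-L) * Real.exp (β*(L/(2*π*m*Cg^2)))) := by ring
    _ = π * r0^2 * Real.exp (-L + -L + β*(L/(2*π*m*Cg^2))) := by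
        rw [← Real.exp_add, ← Real.exp_add]
    _ = π * r0^2 * Real.exp ((β/(2*π*m*Cg^2) - 2)*L) := by
        rw [show -L + -L + β*(L/(2*π*m*Cg^2)) = (β/(2*π*m*Cg^2) - 2)*L from by ring]
  have hfinal : C < π * r0^2 * Real.exp (κ*L) := by
    have hexpL : X * Real.exp 1 ≤ Real.exp (κ*L) := by
      have h := Real.exp_le_exp.2 hκL
      rwa [Real.exp_add, Real.exp_log hXpos] at h
    have hC : C ≤ |C| := le_abs_self C
    have he1 : (1:ℝ) ≤ Real.exp 1 := by
      have := Real.add_one_le_exp 1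
      linarith
    have hπr0X : π*r0^2*X = |C|+1 := by
      rw [hXdef]
      field_simp
    have h5 : π*r0^2*(X * Real.exp 1) ≤ π*r0^2*Real.exp (κ*L) :=
      mul_le_mul_of_nonneg_left hexpL (by positivity)
    have h6 : π*r0^2*(X*Real.exp 1) = (|C|+1)*Real.exp 1 := by rw [← hπr0X]; ring
    have h7 : (|C|+1) ≤ (|C|+1)*Real.exp 1 :=
      le_mul_of_one_le_right (by positivity) he1
    calc C ≤ |C| := hC
    _ < |C|+1 := lt_add_one _
    _ ≤ (|C|+1)*Real.exp 1 := h7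
    _ = π*r0^2*(X*Real.exp 1) := h6.symm
    _ ≤ π*r0^2*Real.exp (κ*L) := h5
  refine ⟨u, hsmooth, hcompact, hann, hinv, henergy, ?_⟩
  calc C < π * r0^2 * Real.exp (κ*L) := hfinal
  _ = π * ρ^2 * Real.exp (β*t^2) := hval.symm
  _ ≤ ∫ x in annulus, Real.exp (β * u x^2) := hlower
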